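/- arXiv:2406.18763 — 2 statements merged into one kernel-verified Lean document; each statement's English description precedes it below -/
import Mathlib

section
/- Let K ≥ 1 and let v_1, …, v_{K+1} be real-valued random variables on a probability space whose joint distribution is exchangeable. Fix α ∈ (0,1) with ⌈(K+1)(1−α)⌉ ≤ K, and let q̂ be the ⌈(K+1)(1−α)⌉-th order statistic of v_1, …, v_K. Then ℙ(v_{K+1} ≤ q̂) ≥ 1 − α. -/
/-!
Fix `m < K` and call `j` good at `ω` if `v j ω` is at most the `m`-th order statistic of all
`K + 1` scores. At every `ω` at least `m + 1` indices are good, and by exchangeability every index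
is good with the same probability, so the last one is good with probability at least
`(m + 1) / (K + 1)`. Since `v_{K+1}` is not below itself, the last index is good exactly when
`v_{K+1}` is at most the `m`-th order statistic of the first `K` scores.
-/

open MeasureTheory

/-- The `t`-th smallest value (0-indexed) among `w 0, …, w (K-1)`. -/
noncomputable def orderStat {K : ℕ} (w : Fin K → ℝ) (t : Fin K) : ℝ :=
  w (Tuple.sort w t)

open Finset

lemma card_filter_univ_comp_perm {ι : Type*} [Fintype ι] (σ : Equiv.Perm ι) (p : ι → Prop)
    [DecidablePred p] : #{i | p (σ i)} = #{i | p i} :=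
  card_equiv σ (by simp)

namespace orderStat

variable {n : ℕ} (w : Fin n → ℝ)

lemma comp_perm (σ : Equiv.Perm (Fin n)) : orderStat (w ∘ σ) = orderStat w :=
  funext fun t => congrFun (Tuple.comp_perm_comp_sort_eq_comp_sort (f := w) (σ := σ)) t

lemma lt_iff_lt_card {t : Fin n} {x : ℝ} : orderStat w t < x ↔ (t : ℕ) < #{i | w i < x} := by
  rw [← card_filter_univ_comp_perm (Tuple.sort w) (w · < x)]
  exact (Tuple.lt_card_lt_iff_apply_lt_of_monotone (Tuple.monotone_sort w)).symm

lemma lt_card_filter_le (t : Fin n) : (t : ℕ) < #{i | w i ≤ orderStat w t} := by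
  rw [← card_filter_univ_comp_perm (Tuple.sort w) (w · ≤ orderStat w t)]
  exact (Tuple.lt_card_le_iff_apply_le_of_monotone (Tuple.monotone_sort w)).2 le_rfl

end orderStat

lemma le_orderStat_init_iff {K : ℕ} (u : Fin (K + 1) → ℝ) (m : Fin K) {x : ℝ}
    (hx : x ≤ u (Fin.last K)) :
    x ≤ orderStat (Fin.init u) m ↔ x ≤ orderStat u m.castSucc := by
  have hcard : #{i | Fin.init u i < x} = #{i | u i < x} := by
    simp only [card_filter, Fin.sum_univ_castSucc, not_lt.2 hx, if_false, add_zero]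
    rfl
  simp only [← not_lt, orderStat.lt_iff_lt_card, hcard, Fin.val_castSucc]

lemma measurableSet_le_orderStat {n : ℕ} (j t : Fin n) :
    MeasurableSet {u : Fin n → ℝ | u j ≤ orderStat u t} := by
  simp only [← not_lt, orderStat.lt_iff_lt_card]
  simp only [not_lt, card_filter]
  refine measurableSet_le (Finset.measurable_sum (M := ℕ) _ fun i _ => ?_) measurable_const
  exact Measurable.ite (measurableSet_lt (measurable_pi_apply i) (measurable_pi_apply j))
    measurable_const measurable_const

open Classical in
lemma le_sum_measure_of_le_card {Ω ι : Type*} [MeasurableSpace Ω] [Fintype ι]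
    (μ : Measure Ω) [IsProbabilityMeasure μ] {E : ι → Set Ω} (hE : ∀ i, MeasurableSet (E i))
    {N : ℕ} (hN : ∀ ω, N ≤ #{i | ω ∈ E i}) :
    (N : ENNReal) ≤ ∑ i, μ (E i) := by
  have hcard (ω : Ω) : (#{i | ω ∈ E i} : ENNReal) = ∑ i, (E i).indicator 1 ω := by
    rw [card_filter]
    push_cast
    simp only [Set.indicator_apply, Pi.one_apply]
  calc (N : ENNReal) = ∫⁻ _, (N : ENNReal) ∂μ := by simp
    _ ≤ ∫⁻ ω, ∑ i, (E i).indicator 1 ω ∂μ :=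
      lintegral_mono fun ω => (hcard ω) ▸ Nat.cast_le.2 (hN ω)
    _ = ∑ i, μ (E i) := by
      rw [lintegral_finsetSum _ fun i _ => measurable_one.indicator (hE i)]
      exact Finset.sum_congr rfl fun i _ => lintegral_indicator_one (hE i)

section Exchangeable

variable {Ω ι β : Type*} [MeasurableSpace Ω] [MeasurableSpace β]

def Exchangeable (μ : Measure Ω) (v : ι → Ω → β) : Prop :=
  ∀ σ : Equiv.Perm ι, μ.map (fun ω i => v (σ i) ω) = μ.map (fun ω i => v i ω)

lemma Exchangeable.measure_comp_perm {μ : Measure Ω} {v : ι → Ω → β} (hv : Exchangeable μ v)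
    (hmeas : ∀ i, Measurable (v i)) (σ : Equiv.Perm ι) {S : Set (ι → β)} (hS : MeasurableSet S) :
    μ {ω | (fun i => v (σ i) ω) ∈ S} = μ {ω | (fun i => v i ω) ∈ S} := by
  have hmeas_σ : Measurable fun ω i => v (σ i) ω := measurable_pi_lambda _ fun i => hmeas (σ i)
  have hmeas_id : Measurable fun ω i => v i ω := measurable_pi_lambda _ hmeas
  change μ ((fun ω i => v (σ i) ω) ⁻¹' S) = μ ((fun ω i => v i ω) ⁻¹' S)
  rw [← Measure.map_apply hmeas_σ hS, ← Measure.map_apply hmeas_id hS, hv σ]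

end Exchangeable

lemma le_measureReal_le_orderStat {Ω : Type*} [MeasurableSpace Ω] (μ : Measure Ω)
    [IsProbabilityMeasure μ] {K : ℕ} {v : Fin (K + 1) → Ω → ℝ} (hmeas : ∀ i, Measurable (v i))
    (hexch : Exchangeable μ v) (m : Fin K) :
    ((m : ℝ) + 1) / (K + 1) ≤
      μ.real {ω | v (Fin.last K) ω ≤ orderStat (fun i : Fin K => v i.castSucc ω) m} := by
  classical
  set E : Fin (K + 1) → Set Ω := fun j => {ω | v j ω ≤ orderStat (fun i => v i ω) m.castSucc}
  have hE_meas (j : Fin (K + 1)) : MeasurableSet (E j) :=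
    measurable_pi_lambda _ hmeas (measurableSet_le_orderStat j m.castSucc)
  have hE_eq (j : Fin (K + 1)) : μ (E j) = μ (E (Fin.last K)) := by
    have h := hexch.measure_comp_perm hmeas (Equiv.swap j (Fin.last K))
      (measurableSet_le_orderStat (Fin.last K) m.castSucc)
    have hperm (ω : Ω) : orderStat (fun i => v (Equiv.swap j (Fin.last K) i) ω) m.castSucc =
        orderStat (fun i => v i ω) m.castSucc :=
      congrFun (orderStat.comp_perm (fun i => v i ω) _) _
    simpa only [Set.mem_ofPred_eq, Equiv.swap_apply_right, hperm] using h
  have hcount (ω : Ω) : (m : ℕ) + 1 ≤ #{j | ω ∈ E j} :=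
    orderStat.lt_card_filter_le (fun i => v i ω) m.castSucc
  have hsum := le_sum_measure_of_le_card μ hE_meas hcount
  rw [Finset.sum_congr rfl fun j _ => hE_eq j, sum_const, card_univ, Fintype.card_fin,
    nsmul_eq_mul] at hsum
  have hcover : {ω | v (Fin.last K) ω ≤ orderStat (fun i : Fin K => v i.castSucc ω) m} =
      E (Fin.last K) :=
    Set.ext fun ω => le_orderStat_init_iff (fun i => v i ω) m le_rfl
  have hreal := ENNReal.toReal_mono (by finiteness) hsum
  rw [ENNReal.toReal_mul] at hreal
  push_cast at hreal
  rw [hcover, div_le_iff₀ (by positivity), mul_comm]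
  exact hreal

/-- Split conformal coverage guarantee: if the scores `v 0, …, v K` (i.e. `v_1, …, v_{K+1}`)
are exchangeable, `α ∈ (0,1)` and `⌈(K+1)(1−α)⌉ ≤ K`, and `q̂` is the
`⌈(K+1)(1−α)⌉`-th order statistic of the first `K` scores, then
`ℙ(v_{K+1} ≤ q̂) ≥ 1 − α`. -/
theorem conformal_coverage
    {Ω : Type*} [MeasurableSpace Ω] (μ : Measure Ω) [IsProbabilityMeasure μ]
    (K : ℕ) (hK : 1 ≤ K)
    (v : Fin (K + 1) → Ω → ℝ) (hmeas : ∀ i, Measurable (v i))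
    (hexch : ∀ σ : Equiv.Perm (Fin (K + 1)),
      Measure.map (fun ω (i : Fin (K + 1)) => v (σ i) ω) μ
        = Measure.map (fun ω (i : Fin (K + 1)) => v i ω) μ)
    (α : ℝ)
    (hceil : ⌈((K : ℝ) + 1) * (1 - α)⌉₊ ≤ K) :
    1 - α ≤
      (μ {ω | v (Fin.last K) ω ≤
        orderStat (fun i : Fin K => v i.castSucc ω)
          ⟨⌈((K : ℝ) + 1) * (1 - α)⌉₊ - 1, by omega⟩}).toReal := by
  set t := ⌈((K : ℝ) + 1) * (1 - α)⌉₊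
  refine le_trans ?_ (le_measureReal_le_orderStat μ hmeas hexch ⟨t - 1, by omega⟩)
  calc 1 - α ≤ (t : ℝ) / (K + 1) := by
        rw [le_div_iff₀ (by positivity), mul_comm]
        exact Nat.le_ceil _
    _ ≤ (((t - 1 : ℕ) : ℝ) + 1) / (K + 1) := by
        gcongr
        norm_cast
        omega
end

section
/- Let K ≥ 1 and let v_1, …, v_{K+1} be real-valued random variables on a probability space whose joint distribution is exchangeable (no assumption of distinct values). Then for every t with 1 ≤ t ≤ K, ℙ( v_{K+1} ≤ v_{(t)} ) ≥ t/(K+1), where v_{(t)} denotes the t-th order statistic of v_1, …, v_K. -/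
open MeasureTheory

open Finset in
lemma card_filter_comp_perm {m : ℕ} (σ : Equiv.Perm (Fin m)) (p : Fin m → Prop)
    [DecidablePred p] :
    (univ.filter (fun i => p (σ i))).card = (univ.filter p).card := by
  refine Finset.card_bij (fun i _ => σ i) ?_ ?_ ?_
  · intro a ha; simp only [mem_filter, mem_univ, true_and] at ha ⊢; exact ha
  · intro a _ b _ h; exact σ.injective h
  · intro b hb
    refine ⟨σ.symm b, ?_, by simp⟩
    simp only [mem_filter, mem_univ, true_and, Equiv.apply_symm_apply] at hb ⊢
    exact hb

open Finset in
lemma le_iff_card_lt_le {m : ℕ} (g : Fin m → ℝ) (hg : Monotone g) (j : Fin m) (a : ℝ) :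
    a ≤ g j ↔ (univ.filter (fun s => g s < a)).card ≤ (j : ℕ) := by
  constructor
  · intro h
    have hsub : univ.filter (fun s => g s < a) ⊆ Finset.Iio j := by
      intro s hs
      simp only [mem_filter, mem_univ, true_and] at hs
      simp only [Finset.mem_Iio]
      by_contra hc
      exact absurd (lt_of_le_of_lt (h.trans (hg (le_of_not_gt hc))) hs) (lt_irrefl _)
    calc (univ.filter (fun s => g s < a)).card ≤ (Finset.Iio j).card :=
          Finset.card_le_card hsub
      _ = (j : ℕ) := Fin.card_Iio j
  · intro h
    by_contra hc
    push_neg at hc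
    have hsub : Finset.Iic j ⊆ univ.filter (fun s => g s < a) := by
      intro s hs
      simp only [Finset.mem_Iic] at hs
      simp only [mem_filter, mem_univ, true_and]
      exact lt_of_le_of_lt (hg hs) hc
    have := Finset.card_le_card hsub
    rw [Fin.card_Iic] at this
    omega

open Finset in
lemma le_orderStat_iff {m : ℕ} (w : Fin m → ℝ) (j : Fin m) (a : ℝ) :
    a ≤ orderStat w j ↔ (univ.filter fun i => w i < a).card ≤ (j : ℕ) := by
  have h := le_iff_card_lt_le (w ∘ Tuple.sort w) (Tuple.monotone_sort w) j a
  simp only [Function.comp_apply] at h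
  rw [orderStat, h, card_filter_comp_perm (Tuple.sort w) (fun i => w i < a)]

open Finset in
/-- At least `t` of the indices `j` have strict-rank at most `t - 1`. -/
lemma count_small_ranks {m : ℕ} (x : Fin m → ℝ) (t : ℕ) (ht1 : 1 ≤ t) (ht : t ≤ m) :
    t ≤ (univ.filter fun j => (univ.filter fun i => x i < x j).card ≤ t - 1).card := by
  classical
  have key : ∀ s : Fin t, Tuple.sort x (Fin.castLE ht s) ∈
      (univ.filter fun j => (univ.filter fun i => x i < x j).card ≤ t - 1) := by
    intro s
    simp only [mem_filter, mem_univ, true_and]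
    set s' : Fin m := Fin.castLE ht s
    have h := (le_iff_card_lt_le (x ∘ Tuple.sort x) (Tuple.monotone_sort x) s'
      ((x ∘ Tuple.sort x) s')).mp le_rfl
    simp only [Function.comp_apply] at h
    rw [card_filter_comp_perm (Tuple.sort x) (fun i => x i < x (Tuple.sort x s'))] at h
    have hs : (s' : ℕ) = (s : ℕ) := rfl
    have hst : (s : ℕ) < t := s.isLt
    omega
  have hinj : Set.InjOn (fun s : Fin t => Tuple.sort x (Fin.castLE ht s))
      (univ : Finset (Fin t)) := by
    intro a _ b _ h
    have := (Tuple.sort x).injective h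
    exact Fin.castLE_injective ht this
  have := Finset.card_le_card_of_injOn (fun s : Fin t => Tuple.sort x (Fin.castLE ht s))
    (fun s _ => key s) hinj
  simpa using this

open Finset in
lemma card_filter_lt_last {K : ℕ} (x : Fin (K + 1) → ℝ) :
    (univ.filter fun i : Fin (K + 1) => x i < x (Fin.last K)).card
      = (univ.filter fun i : Fin K => x i.castSucc < x (Fin.last K)).card := by
  rw [Finset.card_filter, Finset.card_filter, Fin.sum_univ_castSucc]
  simp

/-- If `v 0, …, v K` (i.e. `v_1, …, v_{K+1}`) are exchangeable real random variables
(ties allowed), then for every `1 ≤ t ≤ K`, `ℙ(v_{K+1} ≤ v_{(t)}) ≥ t/(K+1)`, where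
`v_{(t)}` is the `t`-th order statistic of `v_1, …, v_K`. -/
theorem prob_le_orderStat_ge
    {Ω : Type*} [MeasurableSpace Ω] (μ : Measure Ω) [IsProbabilityMeasure μ]
    (K : ℕ) (hK : 1 ≤ K)
    (v : Fin (K + 1) → Ω → ℝ) (hmeas : ∀ i, Measurable (v i))
    (hexch : ∀ σ : Equiv.Perm (Fin (K + 1)),
      Measure.map (fun ω (i : Fin (K + 1)) => v (σ i) ω) μ
        = Measure.map (fun ω (i : Fin (K + 1)) => v i ω) μ)
    (t : ℕ) (ht1 : 1 ≤ t) (ht2 : t ≤ K) :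
    (t : ℝ) / (K + 1) ≤
      (μ {ω | v (Fin.last K) ω ≤
        orderStat (fun i : Fin K => v i.castSucc ω) ⟨t - 1, by omega⟩}).toReal := by
  classical
  set V : Ω → (Fin (K + 1) → ℝ) := fun ω i => v i ω with hV
  have hVmeas : Measurable V := measurable_pi_lambda _ (fun i => hmeas i)
  set c : (Fin (K + 1) → ℝ) → Fin (K + 1) → ℕ :=
    fun x j => (Finset.univ.filter fun i => x i < x j).card with hc
  set S : Fin (K + 1) → Set (Fin (K + 1) → ℝ) := fun j => {x | c x j ≤ t - 1} with hS
  have hSmeas : ∀ j, MeasurableSet (S j) := by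
    intro j
    have hcm : Measurable fun x => c x j := by
      simp only [hc, Finset.card_filter]
      apply Finset.measurable_sum
      intro i _
      exact Measurable.ite
        (measurableSet_lt (measurable_pi_apply i) (measurable_pi_apply j))
        measurable_const measurable_const
    exact hcm ((Set.to_countable {n : ℕ | n ≤ t - 1}).measurableSet)
  have hEmeas : ∀ j, MeasurableSet (V ⁻¹' S j) := fun j => hVmeas (hSmeas j)
  -- all the events have the same probability
  have hsame : ∀ j, μ (V ⁻¹' S j) = μ (V ⁻¹' S (Fin.last K)) := by
    intro j
    set σ := Equiv.swap j (Fin.last K) with hσ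
    have hW : Measurable fun ω (i : Fin (K + 1)) => v (σ i) ω :=
      measurable_pi_lambda _ (fun i => hmeas _)
    have h1 := congrArg (fun m : Measure (Fin (K + 1) → ℝ) => m (S (Fin.last K))) (hexch σ)
    rw [Measure.map_apply hW (hSmeas _), Measure.map_apply hVmeas (hSmeas _)] at h1
    rw [← h1]
    congr 1
    ext ω
    simp only [Set.mem_preimage, hS, Set.mem_setOf_eq]
    have hcard : c (fun i => v (σ i) ω) (Fin.last K) = c (V ω) (σ (Fin.last K)) := by
      simp only [hc, hV]
      exact card_filter_comp_perm σ (fun i => v i ω < v (σ (Fin.last K)) ω)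
    rw [hcard, hσ, Equiv.swap_apply_right]
  -- identify the event
  have hEkey : {ω | v (Fin.last K) ω ≤
      orderStat (fun i : Fin K => v i.castSucc ω) ⟨t - 1, by omega⟩}
      = V ⁻¹' S (Fin.last K) := by
    ext ω
    simp only [Set.mem_setOf_eq, Set.mem_preimage, hS, hc, hV]
    rw [le_orderStat_iff, card_filter_lt_last (fun i => v i ω)]
  -- the counting bound, integrated
  have hsum : (t : ENNReal) ≤ ∑ j : Fin (K + 1), μ (V ⁻¹' S j) := by
    have h1 : ∀ j : Fin (K + 1), μ (V ⁻¹' S j)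
        = ∫⁻ ω, (V ⁻¹' S j).indicator (fun _ => (1 : ENNReal)) ω ∂μ :=
      fun j => (lintegral_indicator_one (hEmeas j)).symm
    have h2 : ∑ j : Fin (K + 1), μ (V ⁻¹' S j)
        = ∫⁻ ω, ∑ j : Fin (K + 1), (V ⁻¹' S j).indicator (fun _ => (1 : ENNReal)) ω ∂μ := by
      rw [lintegral_finset_sum _ (fun j _ => (measurable_const.indicator (hEmeas j)))]
      exact Finset.sum_congr rfl (fun j _ => h1 j)
    rw [h2]
    have h3 : ∀ ω, (t : ENNReal)
        ≤ ∑ j : Fin (K + 1), (V ⁻¹' S j).indicator (fun _ => (1 : ENNReal)) ω := by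
      intro ω
      have hpt := count_small_ranks (V ω) t ht1 (by omega)
      have h4 : ∑ j : Fin (K + 1), (V ⁻¹' S j).indicator (fun _ => (1 : ENNReal)) ω
          = ((Finset.univ.filter fun j : Fin (K + 1) =>
              (Finset.univ.filter fun i => V ω i < V ω j).card ≤ t - 1).card : ENNReal) := by
        rw [Finset.card_filter, Nat.cast_sum]
        refine Finset.sum_congr rfl (fun j _ => ?_)
        rw [Set.indicator_apply]
        by_cases hj : ω ∈ V ⁻¹' S j
        · have : (Finset.univ.filter fun i => V ω i < V ω j).card ≤ t - 1 := hj
          simp [hj, this]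
        · have : ¬ (Finset.univ.filter fun i => V ω i < V ω j).card ≤ t - 1 := hj
          simp [hj, this]
      rw [h4]
      exact_mod_cast hpt
    calc (t : ENNReal) = ∫⁻ _, (t : ENNReal) ∂μ := by simp
      _ ≤ _ := lintegral_mono h3
  have hKsum : ∑ j : Fin (K + 1), μ (V ⁻¹' S j)
      = ((K + 1 : ℕ) : ENNReal) * μ (V ⁻¹' S (Fin.last K)) := by
    rw [Finset.sum_congr rfl (fun j _ => hsame j), Finset.sum_const, Finset.card_univ,
      Fintype.card_fin, nsmul_eq_mul]
  rw [hEkey]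
  set p := μ (V ⁻¹' S (Fin.last K)) with hp
  have hple : p ≤ 1 := prob_le_one
  have hfin : ((K + 1 : ℕ) : ENNReal) * p ≠ ⊤ :=
    ENNReal.mul_ne_top (by simp) (lt_of_le_of_lt hple ENNReal.one_lt_top).ne
  have hto := ENNReal.toReal_mono hfin (hsum.trans_eq hKsum)
  rw [ENNReal.toReal_mul, ENNReal.toReal_natCast, ENNReal.toReal_natCast] at hto
  rw [div_le_iff₀ (by positivity)]
  push_cast at hto ⊢
  linarith
end
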